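/- Let φ : A* → M be a surjective monoid homomorphism onto a finite monoid M. Define x ∼_φ y iff (1) φ(x) = φ(y), (2) every good factorization of x is equivalent to some good factorization of y, and (3) every good factorization of y is equivalent to some good factorization of x (where good factorizations (x₀,a,x₁) and (y₀,b,y₁) are equivalent when φ(x₀)=φ(y₀), a=b, φ(x₁)=φ(y₁)). Then ∼_φ is a monoid congruence on A*. -/

import Mathlib

/-- Green `R`-quasi-order on a monoid: `s ≤_R t` iff `s ∈ tM`. -/
def RLe {M : Type*} [Monoid M] (s t : M) : Prop := ∃ x, s = t * x

/-- Strict Green `R`-order. -/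
def RLt {M : Type*} [Monoid M] (s t : M) : Prop := RLe s t ∧ ¬ RLe t s

/-- Green `L`-quasi-order on a monoid: `s ≤_L t` iff `s ∈ Mt`. -/
def LLe {M : Type*} [Monoid M] (s t : M) : Prop := ∃ x, s = x * t

/-- Strict Green `L`-order. -/
def LLt {M : Type*} [Monoid M] (s t : M) : Prop := LLe s t ∧ ¬ LLe t s

/-- `(x₀, a, x₁)` is a good factorization with respect to `φ`:
`φ(x₀a) <_R φ(x₀)` and `φ(ax₁) <_L φ(x₁)`. -/
def GoodFact {A M : Type*} [Monoid M] (φ : FreeMonoid A →* M)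
    (x₀ : FreeMonoid A) (a : A) (x₁ : FreeMonoid A) : Prop :=
  RLt (φ (x₀ * FreeMonoid.of a)) (φ x₀) ∧ LLt (φ (FreeMonoid.of a * x₁)) (φ x₁)

/-- `(x₀, a, x₁)` is a good factorization of the word `w` with respect to `φ`. -/
def GoodFactOf {A M : Type*} [Monoid M] (φ : FreeMonoid A →* M)
    (w x₀ : FreeMonoid A) (a : A) (x₁ : FreeMonoid A) : Prop :=
  w = x₀ * FreeMonoid.of a * x₁ ∧ GoodFact φ x₀ a x₁

/-- The Pin–Thérien relation `∼_φ`: same image under `φ`, and the good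
factorizations of each word are equivalent to good factorizations of the other. -/
def PTRel {A M : Type*} [Monoid M] (φ : FreeMonoid A →* M) (x y : FreeMonoid A) : Prop :=
  φ x = φ y ∧
    (∀ (x₀ : FreeMonoid A) (a : A) (x₁ : FreeMonoid A), GoodFactOf φ x x₀ a x₁ →
      ∃ y₀ y₁ : FreeMonoid A, GoodFactOf φ y y₀ a y₁ ∧ φ x₀ = φ y₀ ∧ φ x₁ = φ y₁) ∧
    (∀ (y₀ : FreeMonoid A) (a : A) (y₁ : FreeMonoid A), GoodFactOf φ y y₀ a y₁ →
      ∃ x₀ x₁ : FreeMonoid A, GoodFactOf φ x x₀ a x₁ ∧ φ x₀ = φ y₀ ∧ φ x₁ = φ y₁)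

/-!
Conditions (2) and (3) say that the good factorizations of each word are matched by those of
the other, and matching is reflexive and transitive. For compatibility with products, the
distinguished letter of a good factorization of `x * z` lies in `x` or in `z`. Cutting off the
other factor keeps the factorization good, because a strict `R`-descent `p u v <_R p u` forces
`u v <_R u` (dually for `L`); so it is matched in `y` (or `w`), and appending `w` (or
prepending `y`) to the match gives a good factorization of `y * w`, since goodness only
depends on the `φ`-images of the two sides.
-/

section Green

variable {M : Type*} [Monoid M]

theorem RLt.of_mul_left {p u v : M} (h : RLt (p * u * v) (p * u)) : RLt (u * v) u := by
  refine ⟨⟨v, rfl⟩, fun ⟨m, hm⟩ => h.2 ⟨m, ?_⟩⟩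
  rw [mul_assoc p, mul_assoc p, ← hm]

theorem LLt.of_mul_right {p u v : M} (h : LLt (v * u * p) (u * p)) : LLt (v * u) u := by
  refine ⟨⟨v, rfl⟩, fun ⟨m, hm⟩ => h.2 ⟨m, ?_⟩⟩
  rw [← mul_assoc, ← hm]

end Green

namespace FreeMonoid

variable {A : Type*}

theorem mul_eq_mul_of_mul_cases {x z u₀ u₁ : FreeMonoid A} {a : A}
    (h : x * z = u₀ * of a * u₁) :
    (∃ t, x = u₀ * of a * t ∧ u₁ = t * z) ∨ (∃ s, u₀ = x * s ∧ z = s * of a * u₁) := by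
  have h' : x.toList ++ z.toList = u₀.toList ++ a :: u₁.toList := by
    simpa using congrArg toList h
  rcases List.append_eq_append_iff.mp h' with ⟨s, hu₀, hz⟩ | ⟨c, hx, hc⟩
  · exact .inr ⟨ofList s, toList.injective (by simpa using hu₀),
      toList.injective (by simpa using hz)⟩
  · rcases List.cons_eq_append_iff.mp hc with ⟨rfl, hz⟩ | ⟨t, rfl, hu₁⟩
    · exact .inr ⟨1, toList.injective (by simpa using hx.symm),
        toList.injective (by simpa using hz)⟩
    · exact .inl ⟨ofList t, toList.injective (by simpa using hx),
        toList.injective (by simpa using hu₁)⟩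

end FreeMonoid

section GoodFactorizations

variable {A M : Type*} [Monoid M] {φ : FreeMonoid A →* M}

theorem GoodFact.congr {x₀ x₁ y₀ y₁ : FreeMonoid A} {a : A} (h : GoodFact φ x₀ a x₁)
    (h₀ : φ x₀ = φ y₀) (h₁ : φ x₁ = φ y₁) : GoodFact φ y₀ a y₁ := by
  simpa only [GoodFact, map_mul, h₀, h₁] using h

theorem GoodFact.of_mul_left {x x₀ x₁ : FreeMonoid A} {a : A}
    (h : GoodFact φ (x * x₀) a x₁) : GoodFact φ x₀ a x₁ := by
  refine ⟨?_, h.2⟩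
  simpa only [map_mul] using RLt.of_mul_left (p := φ x) (by simpa only [map_mul] using h.1)

theorem GoodFact.of_mul_right {x₀ x₁ z : FreeMonoid A} {a : A}
    (h : GoodFact φ x₀ a (x₁ * z)) : GoodFact φ x₀ a x₁ := by
  refine ⟨h.1, ?_⟩
  simpa only [map_mul] using LLt.of_mul_right (p := φ z)
    (by simpa only [map_mul, mul_assoc] using h.2)

variable (φ) in
def GoodFactsMatched (x y : FreeMonoid A) : Prop :=
  ∀ (x₀ : FreeMonoid A) (a : A) (x₁ : FreeMonoid A), GoodFactOf φ x x₀ a x₁ →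
    ∃ y₀ y₁ : FreeMonoid A, GoodFactOf φ y y₀ a y₁ ∧ φ x₀ = φ y₀ ∧ φ x₁ = φ y₁

theorem PTRel_iff {x y : FreeMonoid A} :
    PTRel φ x y ↔ φ x = φ y ∧ GoodFactsMatched φ x y ∧ GoodFactsMatched φ y x := by
  refine and_congr_right fun _ => and_congr_right fun _ => forall₄_congr fun _ _ _ _ => ?_
  exact exists₂_congr fun _ _ => and_congr_right fun _ => and_congr eq_comm eq_comm

theorem GoodFactsMatched.refl (x : FreeMonoid A) : GoodFactsMatched φ x x :=
  fun x₀ _ x₁ h => ⟨x₀, x₁, h, rfl, rfl⟩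

theorem GoodFactsMatched.trans {x y z : FreeMonoid A} (hxy : GoodFactsMatched φ x y)
    (hyz : GoodFactsMatched φ y z) : GoodFactsMatched φ x z := by
  intro x₀ a x₁ hx
  obtain ⟨y₀, y₁, hy, e₀, e₁⟩ := hxy x₀ a x₁ hx
  obtain ⟨z₀, z₁, hz, f₀, f₁⟩ := hyz y₀ a y₁ hy
  exact ⟨z₀, z₁, hz, e₀.trans f₀, e₁.trans f₁⟩

theorem GoodFactsMatched.mul {x y z w : FreeMonoid A} (hxy : φ x = φ y) (hzw : φ z = φ w)
    (hxy' : GoodFactsMatched φ x y) (hzw' : GoodFactsMatched φ z w) :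
    GoodFactsMatched φ (x * z) (y * w) := by
  rintro u₀ a u₁ ⟨hu, hgood⟩
  rcases FreeMonoid.mul_eq_mul_of_mul_cases hu with ⟨t, hx, rfl⟩ | ⟨s, rfl, hz⟩
  · obtain ⟨y₀, y₁, ⟨hy, -⟩, e₀, e₁⟩ := hxy' u₀ a t ⟨hx, hgood.of_mul_right⟩
    have e₁' : φ (t * z) = φ (y₁ * w) := by rw [map_mul, map_mul, e₁, hzw]
    exact ⟨y₀, y₁ * w, ⟨by rw [hy, mul_assoc _ y₁], hgood.congr e₀ e₁'⟩, e₀, e₁'⟩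
  · obtain ⟨w₀, w₁, ⟨hw, -⟩, e₀, e₁⟩ := hzw' s a u₁ ⟨hz, hgood.of_mul_left⟩
    have e₀' : φ (x * s) = φ (y * w₀) := by rw [map_mul, map_mul, e₀, hxy]
    exact ⟨y * w₀, w₁, ⟨by rw [hw, mul_assoc, mul_assoc, mul_assoc], hgood.congr e₀' e₁⟩,
      e₀', e₁⟩

end GoodFactorizations

theorem PTRel_is_congruence_general {A M : Type*} [Monoid M] (φ : FreeMonoid A →* M) :
    Equivalence (PTRel φ) ∧
      ∀ x y z w : FreeMonoid A, PTRel φ x y → PTRel φ z w →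
        PTRel φ (x * z) (y * w) := by
  refine ⟨⟨fun x => PTRel_iff.2 ⟨rfl, .refl x, .refl x⟩, fun hxy => ?_, fun hxy hyz => ?_⟩,
    fun x y z w hxy hzw => ?_⟩
  · obtain ⟨h, hxy, hyx⟩ := PTRel_iff.1 hxy
    exact PTRel_iff.2 ⟨h.symm, hyx, hxy⟩
  · obtain ⟨h, hxy, hyx⟩ := PTRel_iff.1 hxy
    obtain ⟨h', hyz, hzy⟩ := PTRel_iff.1 hyz
    exact PTRel_iff.2 ⟨h.trans h', hxy.trans hyz, hzy.trans hyx⟩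
  · obtain ⟨hxy, hxy', hyx'⟩ := PTRel_iff.1 hxy
    obtain ⟨hzw, hzw', hwz'⟩ := PTRel_iff.1 hzw
    exact PTRel_iff.2 ⟨by rw [map_mul, map_mul, hxy, hzw], hxy'.mul hxy hzw hzw',
      hyx'.mul hxy.symm hzw.symm hwz'⟩

theorem PTRel_is_congruence {A M : Type*} [Monoid M] [Finite M] (φ : FreeMonoid A →* M)
    (hsurj : Function.Surjective φ) :
    Equivalence (PTRel φ) ∧
      ∀ x y z w : FreeMonoid A, PTRel φ x y → PTRel φ z w →
        PTRel φ (x * z) (y * w) :=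
  PTRel_is_congruence_general φ
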